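/- arXiv:1511.00353 — 2 statements merged into one kernel-verified Lean document; each statement's English description precedes it below -/
import Mathlib

section
/- Let (E_t)_{t≥1} be i.i.d. nonnegative random variables with E[E_1] > 0, B̄ > 0, γ > 0. Let g be an admissible online policy for initial battery level b_1 = B̄ with long-term average throughput R = liminf_{n→∞} T_n(g). Then for every ε > 0 there exists an admissible online policy g̃ for initial battery level b_1 = 0 whose long-term average throughput satisfies liminf_{n→∞} T_n(g̃) ≥ R − ε. Consequently, the optimal long-term average throughput does not depend on the initial battery level. -/
open MeasureTheory ProbabilityTheory Filter Finset

open scoped Topology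

/-!
By the strong law of large numbers, for `ℓ` large the arrivals `E 2, …, E (ℓ + 1)` alone fill
the battery with probability `p` close to `1`, whatever the initial level. The new policy stays
idle for `ℓ + 1` slots; if the battery was filled in this way it then replays `g` on the shifted
arrivals `E (ℓ + 2), E (ℓ + 3), …`, and otherwise it stays idle forever. The gate and the shifted
arrivals are independent, and the shifted arrivals have the same law as the original ones, so the
expected reward at time `ℓ + 1 + s` is `p` times that of `g` at time `s`. A delay of `ℓ + 1` slots
does not change the Cesàro liminf of bounded rewards, hence the throughput is at least
`R - (1 - p) * rate γ B ≥ R - ε`.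

The replayed policy clips its requests to `[0, b t]`, which makes it admissible for every arrival
sequence, not only for those that `g` was designed for.

Raising the initial level keeps a policy admissible; with the construction above this makes the
optimal throughput independent of the initial level.
-/

theorem DependsOn.exists_measurable_comp {ι ι' β : Type*} [MeasurableSpace β]
    {F : (ι' → ℝ) → β} (κ : ι → ι') (hF : Measurable F) (hdep : DependsOn F (Set.range κ)) :
    ∃ φ : (ι → ℝ) → β, Measurable φ ∧ ∀ e, F e = φ (e ∘ κ) := by
  classical
  refine ⟨fun v ↦ F fun n ↦ if h : ∃ i, κ i = n then v h.choose else 0, hF.comp ?_,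
    fun e ↦ hdep ?_⟩
  · refine measurable_pi_lambda _ fun n ↦ ?_
    by_cases h : ∃ i, κ i = n
    · simpa only [dif_pos h] using measurable_pi_apply _
    · simpa only [dif_neg h] using measurable_const
  · rintro _ ⟨i, rfl⟩
    have h : ∃ j, κ j = κ i := ⟨i, rfl⟩
    simp only [dif_pos h, Function.comp_apply, h.choose_spec]

theorem DependsOn.exists_measurable_comp_fin {F : (ℕ → ℝ) → ℝ} {t : ℕ} (hF : Measurable F)
    (hdep : DependsOn F (Set.Icc 1 t)) :
    ∃ h : (Fin t → ℝ) → ℝ, Measurable h ∧ ∀ e, F e = h fun i ↦ e (i.1 + 1) := by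
  refine DependsOn.exists_measurable_comp (fun i : Fin t ↦ i.1 + 1) hF (hdep.mono ?_)
  rintro n ⟨h1, h2⟩
  exact ⟨⟨n - 1, by omega⟩, by simp; omega⟩

namespace ProbabilityTheory

variable {Ω : Type*} [MeasurableSpace Ω] {P : Measure Ω}

theorem iIndepFun.integral_mul_of_dependsOn {ι : Type*} {E : ι → Ω → ℝ}
    (hind : iIndepFun E P) (hE : ∀ i, Measurable (E i)) {S T : Finset ι} (hST : Disjoint S T)
    {F G : (ι → ℝ) → ℝ} (hF : Measurable F) (hG : Measurable G) (hFS : DependsOn F S)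
    (hGT : DependsOn G T) :
    ∫ ω, F (E · ω) * G (E · ω) ∂P = (∫ ω, F (E · ω) ∂P) * ∫ ω, G (E · ω) ∂P := by
  obtain ⟨φ, hφ, hFφ⟩ := DependsOn.exists_measurable_comp ((↑) : S → ι) hF (by simpa using hFS)
  obtain ⟨ψ, hψ, hGψ⟩ := DependsOn.exists_measurable_comp ((↑) : T → ι) hG (by simpa using hGT)
  simp only [hFφ, hGψ]
  exact ((hind.indepFun_finset S T hST hE).comp hφ hψ).integral_mul_eq_mul_integral
    (hφ.comp (by fun_prop)).aestronglyMeasurable (hψ.comp (by fun_prop)).aestronglyMeasurable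

variable {E : ℕ → Ω → ℝ}

theorem iIndepFun.map_shift_eq (hind : iIndepFun E P) (hE : ∀ n, Measurable (E n))
    (hident : ∀ n, IdentDistrib (E n) (E 1) P P) (k : ℕ) :
    P.map (fun ω n ↦ E (k + n) ω) = P.map (fun ω n ↦ E n ω) := by
  rw [(hind.precomp (add_right_injective k)).map_fun_eq_infinitePi_map (fun n ↦ hE _),
    hind.map_fun_eq_infinitePi_map hE]
  simp only [(hident _).map_eq]

theorem iIndepFun.integral_comp_shift (hind : iIndepFun E P) (hE : ∀ n, Measurable (E n))
    (hident : ∀ n, IdentDistrib (E n) (E 1) P P) {F : (ℕ → ℝ) → ℝ} (hF : Measurable F)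
    (k : ℕ) : ∫ ω, F (fun n ↦ E (k + n) ω) ∂P = ∫ ω, F (fun n ↦ E n ω) ∂P := by
  rw [← integral_map (by fun_prop) hF.aestronglyMeasurable, hind.map_shift_eq hE hident,
    integral_map (by fun_prop) hF.aestronglyMeasurable]

theorem tendsto_measureReal_le_sum [IsProbabilityMeasure P] {X : ℕ → Ω → ℝ}
    (hX : ∀ i, Measurable (X i)) (hnn : ∀ i ω, 0 ≤ X i ω) (hint : Integrable (X 0) P)
    (hindep : Pairwise fun i j ↦ IndepFun (X i) (X j) P)
    (hident : ∀ i, IdentDistrib (X i) (X 0) P P) (hpos : 0 < ∫ ω, X 0 ω ∂P) (c : ℝ) :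
    Tendsto (fun n ↦ P.real {ω | c ≤ ∑ i ∈ range n, X i ω}) atTop (𝓝 1) := by
  set A : ℕ → Set Ω := fun n ↦ {ω | c ≤ ∑ i ∈ range n, X i ω}
  have hmono : Monotone A := fun m n hmn ω (hω : c ≤ _) ↦
    hω.trans (sum_le_sum_of_subset_of_nonneg (range_subset_range.2 hmn) fun i _ _ ↦ hnn i ω)
  have hae : ∀ᵐ ω ∂P, ω ∈ ⋃ n, A n := by
    filter_upwards [strong_law_ae_real X hint hindep hident] with ω hω
    by_contra hnot
    simp only [Set.mem_iUnion, Set.mem_ofPred_eq, A, not_exists, not_le] at hnot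
    have : ∫ ω, X 0 ω ∂P ≤ 0 := le_of_tendsto_of_tendsto' hω
      (tendsto_const_div_atTop_nhds_zero_nat c) fun n ↦
        div_le_div_of_nonneg_right (hnot n).le n.cast_nonneg
    linarith
  have hA : MeasurableSet (⋃ n, A n) :=
    .iUnion fun n ↦ measurableSet_le measurable_const (by fun_prop)
  have hone : P (⋃ n, A n) = 1 := (prob_compl_eq_zero_iff hA).1 (ae_iff.1 hae)
  exact (ENNReal.tendsto_toReal ENNReal.one_ne_top).comp
    (hone ▸ tendsto_measure_iUnion_atTop (μ := P) hmono)

end ProbabilityTheory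

namespace BatteryPolicy

noncomputable def cesaro (u : ℕ → ℝ) (n : ℕ) : ℝ := 1 / (n : ℝ) * ∑ t ∈ Icc 1 n, u t

section Cesaro

variable {u w : ℕ → ℝ} {C p : ℝ} {k : ℕ}

lemma cesaro_mem_Icc (hu : ∀ t, 1 ≤ t → u t ∈ Set.Icc 0 C) (n : ℕ) :
    cesaro u n ∈ Set.Icc 0 C := by
  rcases Nat.eq_zero_or_pos n with rfl | hn
  · simpa [cesaro] using (hu 1 le_rfl).1.trans (hu 1 le_rfl).2
  have hsum : ∑ t ∈ Icc 1 n, u t ≤ n * C := by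
    simpa using sum_le_card_nsmul _ _ _ fun t ht ↦ (hu t (mem_Icc.1 ht).1).2
  refine ⟨mul_nonneg (by positivity) (sum_nonneg fun t ht ↦ (hu t (mem_Icc.1 ht).1).1), ?_⟩
  rw [cesaro, one_div, inv_mul_le_iff₀ (by positivity)]
  exact hsum

lemma liminf_cesaro_le (hu : ∀ t, 1 ≤ t → u t ∈ Set.Icc 0 C) : liminf (cesaro u) atTop ≤ C :=
  liminf_le_of_frequently_le (.of_forall fun n ↦ (cesaro_mem_Icc hu n).2)
    (isBoundedUnder_of_eventually_ge (.of_forall fun n ↦ (cesaro_mem_Icc hu n).1))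

lemma sum_Icc_le_sum_Icc_sub_add (hu : ∀ t, 1 ≤ t → u t ∈ Set.Icc 0 C) (n k : ℕ) :
    ∑ t ∈ Icc 1 n, u t ≤ ∑ t ∈ Icc 1 (n - k), u t + k * C := by
  have hsub : Icc 1 (n - k) ⊆ Icc 1 n := Icc_subset_Icc_right (by omega)
  rw [← sum_sdiff hsub, add_comm]
  gcongr
  calc ∑ t ∈ Icc 1 n \ Icc 1 (n - k), u t
      ≤ #(Icc 1 n \ Icc 1 (n - k)) • C :=
        sum_le_card_nsmul _ _ _ fun t ht ↦ (hu t (mem_Icc.1 (mem_sdiff.1 ht).1).1).2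
    _ ≤ k * C := by
        rw [nsmul_eq_mul, card_sdiff_of_subset hsub, Nat.card_Icc, Nat.card_Icc]
        gcongr
        · exact (hu 1 le_rfl).1.trans (hu 1 le_rfl).2
        · omega

lemma sum_Icc_delay (hw0 : ∀ t, t ≤ k → w t = 0) (hw : ∀ s, 1 ≤ s → w (k + s) = p * u s)
    (n : ℕ) : ∑ t ∈ Icc 1 n, w t = p * ∑ s ∈ Icc 1 (n - k), u s := by
  induction n with
  | zero => simp
  | succ n ih =>
    rw [sum_Icc_succ_top (by omega), ih]
    rcases le_or_gt (n + 1) k with hn | hn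
    · rw [hw0 _ hn, add_zero, show n + 1 - k = n - k by omega]
    · rw [show n + 1 - k = n - k + 1 by omega, sum_Icc_succ_top (by omega), mul_add,
        show n + 1 = k + (n - k + 1) by omega, hw _ (by omega)]

lemma cesaro_sub_le_cesaro_delay (hp : p ∈ Set.Icc 0 1) (hu : ∀ t, 1 ≤ t → u t ∈ Set.Icc 0 C)
    (hw0 : ∀ t, t ≤ k → w t = 0) (hw : ∀ s, 1 ≤ s → w (k + s) = p * u s) {n : ℕ}
    (hn : 1 ≤ n) : cesaro u n - (1 - p) * C - k * C / n ≤ cesaro w n := by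
  have hn' : (0 : ℝ) < n := by exact_mod_cast hn
  have hC : 0 ≤ C := (hu 1 le_rfl).1.trans (hu 1 le_rfl).2
  have hnC : ∑ t ∈ Icc 1 n, u t ≤ n * C := by
    have := (cesaro_mem_Icc hu n).2
    rwa [cesaro, one_div, inv_mul_le_iff₀ hn'] at this
  have h1 := mul_le_mul_of_nonneg_left (sum_Icc_le_sum_Icc_sub_add hu n k) hp.1
  have h2 := mul_le_mul_of_nonneg_left hnC (sub_nonneg.2 hp.2)
  have h3 : 0 ≤ (1 - p) * (k * C) := mul_nonneg (sub_nonneg.2 hp.2) (by positivity)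
  rw [cesaro, cesaro, sum_Icc_delay hw0 hw, ← sub_nonneg]
  have key : 1 / (n : ℝ) * (p * ∑ s ∈ Icc 1 (n - k), u s) -
      (1 / n * ∑ t ∈ Icc 1 n, u t - (1 - p) * C - k * C / n) =
      (p * ∑ s ∈ Icc 1 (n - k), u s - (∑ t ∈ Icc 1 n, u t - (1 - p) * C * n - k * C)) / n := by
    field_simp
  rw [key]
  exact div_nonneg (by nlinarith) hn'.le

lemma sub_le_liminf_cesaro_delay (hp : p ∈ Set.Icc 0 1) (hu : ∀ t, 1 ≤ t → u t ∈ Set.Icc 0 C)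
    (hw0 : ∀ t, t ≤ k → w t = 0) (hw : ∀ s, 1 ≤ s → w (k + s) = p * u s) :
    liminf (cesaro u) atTop - (1 - p) * C ≤ liminf (cesaro w) atTop := by
  have hwC : ∀ t, 1 ≤ t → w t ∈ Set.Icc 0 C := by
    intro t ht
    rcases le_or_gt t k with htk | htk
    · rw [hw0 t htk]
      exact ⟨le_rfl, (hu 1 le_rfl).1.trans (hu 1 le_rfl).2⟩
    · obtain ⟨s, rfl⟩ : ∃ s, t = k + s := ⟨t - k, by omega⟩
      have hus := hu s (by omega)
      rw [hw s (by omega)]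
      exact ⟨mul_nonneg hp.1 hus.1, by nlinarith [hp.1, hp.2, hus.1, hus.2]⟩
  set d : ℕ → ℝ := fun n ↦ -((1 - p) * C) - k * C / n
  have hd : Tendsto d atTop (𝓝 (-((1 - p) * C))) := by
    simpa using tendsto_const_nhds.sub (tendsto_const_div_atTop_nhds_zero_nat (k * C))
  have hu_ge : IsBoundedUnder (· ≥ ·) atTop (cesaro u) :=
    isBoundedUnder_of_eventually_ge (.of_forall fun n ↦ (cesaro_mem_Icc hu n).1)
  have hu_le : IsBoundedUnder (· ≤ ·) atTop (cesaro u) :=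
    isBoundedUnder_of_eventually_le (.of_forall fun n ↦ (cesaro_mem_Icc hu n).2)
  have hle : ∀ n, 1 ≤ n → (cesaro u + d) n ≤ cesaro w n := fun n hn ↦ by
    simpa [d, sub_eq_add_neg, add_assoc] using cesaro_sub_le_cesaro_delay hp hu hw0 hw hn
  calc liminf (cesaro u) atTop - (1 - p) * C
      = liminf (cesaro u) atTop + liminf d atTop := by rw [hd.liminf_eq, sub_eq_add_neg]
    _ ≤ liminf (cesaro u + d) atTop :=
        le_liminf_add hu_ge hu_le hd.isBoundedUnder_ge hd.isCoboundedUnder_ge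
    _ ≤ liminf (cesaro w) atTop :=
        liminf_le_liminf (eventually_atTop.2 ⟨1, hle⟩)
          (isBoundedUnder_ge_add hu_ge hd.isBoundedUnder_ge)
          (isCoboundedUnder_ge_of_le atTop fun n ↦ (cesaro_mem_Icc hwC n).2)

end Cesaro

noncomputable def rate (γ u : ℝ) : ℝ := 1 / 2 * Real.logb 2 (1 + γ * u)

section Rate

variable {γ : ℝ}

@[simp] lemma rate_zero : rate γ 0 = 0 := by simp [rate]

lemma measurable_rate : Measurable (rate γ) := by
  unfold rate Real.logb
  fun_prop

lemma rate_le_rate (hγ : 0 ≤ γ) {u v : ℝ} (hu : 0 ≤ u) (huv : u ≤ v) :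
    rate γ u ≤ rate γ v := by
  unfold rate
  gcongr
  norm_num

lemma rate_nonneg (hγ : 0 ≤ γ) {u : ℝ} (hu : 0 ≤ u) : 0 ≤ rate γ u :=
  rate_zero (γ := γ) ▸ rate_le_rate hγ le_rfl hu

lemma integral_rate_mem_Icc {Ω : Type*} [MeasurableSpace Ω] {P : Measure Ω}
    [IsProbabilityMeasure P] (hγ : 0 ≤ γ) {B : ℝ} {f : Ω → ℝ} (hf : ∀ ω, f ω ∈ Set.Icc 0 B) :
    ∫ ω, rate γ (f ω) ∂P ∈ Set.Icc 0 (rate γ B) := by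
  have hnn ω : 0 ≤ rate γ (f ω) := rate_nonneg hγ (hf ω).1
  refine ⟨integral_nonneg hnn, ?_⟩
  have := norm_integral_le_of_norm_le_const (μ := P) (.of_forall fun ω ↦
    (Real.norm_of_nonneg (hnn ω)).trans_le (rate_le_rate hγ (hf ω).1 (hf ω).2))
  rwa [probReal_univ, mul_one, Real.norm_of_nonneg (integral_nonneg hnn)] at this

end Rate

variable {B x : ℝ} {a e : ℕ → ℝ}

/-- Battery level when every request `a t` is clipped to the admissible range `[0, b t]`; the
energy `e t` arrives at time `t`. Time starts at `1`, the value at `0` is a dummy. -/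
def clipLevel (B x : ℝ) (a e : ℕ → ℝ) : ℕ → ℝ
  | 0 => x
  | 1 => x
  | t + 2 => min (clipLevel B x a e (t + 1)
      - max 0 (min (a (t + 1)) (clipLevel B x a e (t + 1))) + e (t + 2)) B

def clipAlloc (B x : ℝ) (a e : ℕ → ℝ) (t : ℕ) : ℝ :=
  max 0 (min (a t) (clipLevel B x a e t))

lemma clipLevel_succ {t : ℕ} (ht : 1 ≤ t) :
    clipLevel B x a e (t + 1) =
      min (clipLevel B x a e t - clipAlloc B x a e t + e (t + 1)) B := by
  obtain ⟨t, rfl⟩ := Nat.exists_eq_add_of_le' ht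
  rfl

lemma clipLevel_mem_Icc (hx : x ∈ Set.Icc 0 B) (he : ∀ t, 0 ≤ e t) :
    ∀ t, clipLevel B x a e t ∈ Set.Icc 0 B
  | 0 | 1 => hx
  | t + 2 => by
    have ih := clipLevel_mem_Icc hx he (t + 1)
    have halloc : max 0 (min (a (t + 1)) (clipLevel B x a e (t + 1))) ≤
        clipLevel B x a e (t + 1) :=
      max_le ih.1 (min_le_right _ _)
    refine ⟨le_min ?_ (hx.1.trans hx.2), min_le_right _ _⟩
    linarith [he (t + 2)]

lemma clipAlloc_mem_Icc (hx : x ∈ Set.Icc 0 B) (he : ∀ t, 0 ≤ e t) (t : ℕ) :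
    clipAlloc B x a e t ∈ Set.Icc 0 (clipLevel B x a e t) :=
  ⟨le_max_left _ _, max_le (clipLevel_mem_Icc hx he t).1 (min_le_right _ _)⟩

lemma clipAlloc_eq_zero (hx : x ∈ Set.Icc 0 B) (he : ∀ t, 0 ≤ e t) {t : ℕ} (ha : a t = 0) :
    clipAlloc B x a e t = 0 := by
  rw [clipAlloc, ha, min_eq_left (clipLevel_mem_Icc hx he t).1, max_self]

lemma clipLevel_eq_of_fill (hx : x ∈ Set.Icc 0 B) (he : ∀ t, 0 ≤ e t) {k : ℕ}
    (hzero : ∀ t, 1 ≤ t → t ≤ k → a t = 0) (hfill : B ≤ x + ∑ i ∈ range k, e (i + 2)) :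
    clipLevel B x a e (k + 1) = B := by
  suffices h : ∀ t ≤ k, min (x + ∑ i ∈ range t, e (i + 2)) B ≤ clipLevel B x a e (t + 1) from
    le_antisymm (clipLevel_mem_Icc hx he _).2 (by simpa [min_eq_right hfill] using h k le_rfl)
  intro t ht
  induction t with
  | zero => simp [clipLevel]
  | succ t ih =>
    have he' := he (t + 1 + 1)
    rw [clipLevel_succ (by omega), clipAlloc_eq_zero hx he (hzero _ (by omega) ht), sub_zero,
      sum_range_succ, ← add_assoc]
    calc min (x + ∑ i ∈ range t, e (i + 2) + e (t + 1 + 1)) B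
        = min (min (x + ∑ i ∈ range t, e (i + 2)) B + e (t + 1 + 1)) B := by
          rw [← min_add_add_right, min_assoc, min_eq_right (by linarith : B ≤ B + e (t + 1 + 1))]
      _ ≤ min (clipLevel B x a e (t + 1) + e (t + 1 + 1)) B := by
          gcongr
          exact ih (by omega)

lemma clipAlloc_eq_of_admissible {x' : ℝ} (hx : x' ≤ x) {β : ℕ → ℝ} (hβ1 : β 1 = x')
    (hβ : ∀ t, 1 ≤ t → β (t + 1) = min (β t - a t + e (t + 1)) B)
    (hadm : ∀ t, 1 ≤ t → 0 ≤ a t ∧ a t ≤ β t) {t : ℕ} (ht : 1 ≤ t) :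
    clipAlloc B x a e t = a t := by
  have alloc_eq : ∀ t, 1 ≤ t → β t ≤ clipLevel B x a e t → clipAlloc B x a e t = a t :=
    fun t ht hle ↦ by
      rw [clipAlloc, min_eq_left ((hadm t ht).2.trans hle), max_eq_right (hadm t ht).1]
  have key : ∀ t, 1 ≤ t → β t ≤ clipLevel B x a e t := by
    intro t ht
    induction t, ht using Nat.le_induction with
    | base => exact hβ1 ▸ hx
    | succ t ht ih =>
      rw [hβ t ht, clipLevel_succ ht, alloc_eq t ht ih]
      gcongr
  exact alloc_eq t ht (key t ht)

lemma clipAlloc_restart {k : ℕ} {a' : ℕ → ℝ} (hk : clipLevel B x a e (k + 1) = B)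
    (ha : ∀ s, 1 ≤ s → a (k + s) = a' s) {s : ℕ} (hs : 1 ≤ s) :
    clipAlloc B x a e (k + s) = clipAlloc B B a' (fun n ↦ e (k + n)) s := by
  have key : ∀ s, 1 ≤ s →
      clipLevel B x a e (k + s) = clipLevel B B a' (fun n ↦ e (k + n)) s := by
    intro s hs
    induction s, hs using Nat.le_induction with
    | base => exact hk
    | succ s hs ih =>
      rw [← add_assoc, clipLevel_succ (by omega), clipLevel_succ hs, clipAlloc, clipAlloc, ih,
        ha s hs, add_assoc]
  rw [clipAlloc, clipAlloc, key s hs, ha s hs]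

def IsOnlineRule (r : ℕ → (ℕ → ℝ) → ℝ) : Prop :=
  ∀ t, Measurable (r t) ∧ DependsOn (r t) (Set.Icc 1 t)

namespace IsOnlineRule

variable {r : ℕ → (ℕ → ℝ) → ℝ}

lemma clipLevel (hr : IsOnlineRule r) :
    IsOnlineRule fun t e ↦ BatteryPolicy.clipLevel B x (r · e) e t := by
  intro t
  induction t using Nat.strong_induction_on with
  | _ t ih =>
  match t, ih with
  | 0, _ | 1, _ => exact ⟨measurable_const, fun _ _ _ ↦ rfl⟩
  | t + 2, ih =>
    obtain ⟨hmeas, hdep⟩ := ih (t + 1) (by omega)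
    refine ⟨(((hmeas.sub (measurable_const.max (((hr (t + 1)).1).min hmeas))).add
      (measurable_pi_apply _)).min measurable_const), fun e e' hee' ↦ ?_⟩
    have h1 : ∀ i ∈ Set.Icc 1 (t + 1), e i = e' i :=
      fun i hi ↦ hee' i ⟨hi.1, by simp only [Set.mem_Icc] at hi; omega⟩
    simp only [BatteryPolicy.clipLevel, hdep h1, (hr (t + 1)).2 h1, hee' (t + 2) (by simp)]

lemma clipAlloc (hr : IsOnlineRule r) :
    IsOnlineRule fun t e ↦ BatteryPolicy.clipAlloc B x (r · e) e t := fun t ↦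
  ⟨measurable_const.max ((hr t).1.min (hr.clipLevel t).1), fun _ _ h ↦ by
    simp only [BatteryPolicy.clipAlloc, (hr t).2 h, (hr.clipLevel (x := x) (B := B) t).2 h]⟩

end IsOnlineRule

/-- Idle during the slots `1, …, ℓ + 1`; if `e 2 + ⋯ + e (ℓ + 1) ≥ B`, restart `r` at time
`ℓ + 2` on the arrivals from time `ℓ + 1` on, otherwise stay idle. The extra idle slot keeps the
gate, which reads `e 2, …, e (ℓ + 1)`, independent of the restarted rule, which reads
`e (ℓ + 2), …`. -/
noncomputable def restartRule (B : ℝ) (ℓ : ℕ) (r : ℕ → (ℕ → ℝ) → ℝ) (t : ℕ) (e : ℕ → ℝ) : ℝ :=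
  if ℓ + 1 < t ∧ B ≤ ∑ i ∈ range ℓ, e (i + 2) then r (t - (ℓ + 1)) (fun n ↦ e (ℓ + 1 + n))
  else 0

lemma IsOnlineRule.restartRule {r : ℕ → (ℕ → ℝ) → ℝ} (hr : IsOnlineRule r) (B : ℝ) (ℓ : ℕ) :
    IsOnlineRule (restartRule B ℓ r) := by
  intro t
  unfold BatteryPolicy.restartRule
  by_cases ht : ℓ + 1 < t
  · simp only [ht, true_and]
    refine ⟨Measurable.ite (measurableSet_le measurable_const (by fun_prop))
      ((hr _).1.comp (by fun_prop)) measurable_const, fun e e' hee' ↦ ?_⟩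
    have hsum : ∑ i ∈ range ℓ, e (i + 2) = ∑ i ∈ range ℓ, e' (i + 2) :=
      sum_congr rfl fun i hi ↦ hee' _ ⟨by omega, by simp at hi; omega⟩
    have hshift : r (t - (ℓ + 1)) (fun n ↦ e (ℓ + 1 + n)) =
        r (t - (ℓ + 1)) (fun n ↦ e' (ℓ + 1 + n)) :=
      (hr _).2 fun n hn ↦ hee' _ ⟨by omega, by simp only [Set.mem_Icc] at hn; omega⟩
    simp only [hsum, hshift]
  · simp only [ht, false_and, if_false]
    exact ⟨measurable_const, fun _ _ _ ↦ rfl⟩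

lemma clipAlloc_restartRule_eq_zero {r : ℕ → (ℕ → ℝ) → ℝ} {ℓ t : ℕ} (hx : x ∈ Set.Icc 0 B)
    (he : ∀ t, 0 ≤ e t) (h : ¬ (ℓ + 1 < t ∧ B ≤ ∑ i ∈ range ℓ, e (i + 2))) :
    clipAlloc B x (restartRule B ℓ r · e) e t = 0 :=
  clipAlloc_eq_zero hx he (if_neg h)

lemma clipAlloc_restartRule {r : ℕ → (ℕ → ℝ) → ℝ} {ℓ s : ℕ} (hx : x ∈ Set.Icc 0 B)
    (he : ∀ t, 0 ≤ e t) (hs : 1 ≤ s) :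
    clipAlloc B x (restartRule B ℓ r · e) e (ℓ + 1 + s) =
      if B ≤ ∑ i ∈ range ℓ, e (i + 2) then
        clipAlloc B B (r · fun n ↦ e (ℓ + 1 + n)) (fun n ↦ e (ℓ + 1 + n)) s
      else 0 := by
  split_ifs with hfill
  · refine clipAlloc_restart (clipLevel_eq_of_fill hx he
      (fun t _ ht ↦ if_neg fun h ↦ by omega) ?_) (fun s hs ↦ ?_) hs
    · rw [sum_range_succ]
      linarith [hx.1, he (ℓ + 2)]
    · show restartRule B ℓ r (ℓ + 1 + s) e = r s _
      rw [restartRule, if_pos ⟨by omega, hfill⟩, Nat.add_sub_cancel_left]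
  · exact clipAlloc_restartRule_eq_zero hx he fun h ↦ hfill h.2

variable {Ω : Type*}

structure AdmissibleOnlinePolicy (B x : ℝ) (E g b : ℕ → Ω → ℝ) : Prop where
  init : ∀ ω, b 1 ω = x
  succ : ∀ t, 1 ≤ t → ∀ ω, b (t + 1) ω = min (b t ω - g t ω + E (t + 1) ω) B
  admissible : ∀ t, 1 ≤ t → ∀ ω, 0 ≤ g t ω ∧ g t ω ≤ b t ω
  online : ∀ t, 1 ≤ t → ∃ h : (Fin t → ℝ) → ℝ, Measurable h ∧
    ∀ ω, g t ω = h fun i ↦ E (i.1 + 1) ω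

def clipPolicy (B x : ℝ) (r : ℕ → (ℕ → ℝ) → ℝ) (E : ℕ → Ω → ℝ) (t : ℕ) (ω : Ω) : ℝ :=
  clipAlloc B x (fun s ↦ r s fun n ↦ E n ω) (fun n ↦ E n ω) t

def clipPolicyLevel (B x : ℝ) (r : ℕ → (ℕ → ℝ) → ℝ) (E : ℕ → Ω → ℝ) (t : ℕ) (ω : Ω) : ℝ :=
  clipLevel B x (fun s ↦ r s fun n ↦ E n ω) (fun n ↦ E n ω) t

variable {E g b : ℕ → Ω → ℝ} {r : ℕ → (ℕ → ℝ) → ℝ}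

lemma admissibleOnlinePolicy_clipPolicy (hx : x ∈ Set.Icc 0 B) (hEnn : ∀ t ω, 0 ≤ E t ω)
    (hr : IsOnlineRule r) :
    AdmissibleOnlinePolicy B x E (clipPolicy B x r E) (clipPolicyLevel B x r E) where
  init _ := rfl
  succ _ ht _ := clipLevel_succ ht
  admissible t _ ω := clipAlloc_mem_Icc hx (hEnn · ω) t
  online t _ := by
    obtain ⟨h, hmeas, hh⟩ := DependsOn.exists_measurable_comp_fin
      (hr.clipAlloc (B := B) (x := x) t).1 (hr.clipAlloc t).2
    exact ⟨h, hmeas, fun ω ↦ hh _⟩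

namespace AdmissibleOnlinePolicy

lemma battery_le (hg : AdmissibleOnlinePolicy B x E g b) (hx : x ≤ B) {t : ℕ} (ht : 1 ≤ t)
    (ω : Ω) : b t ω ≤ B := by
  induction t, ht using Nat.le_induction with
  | base => exact hg.init ω ▸ hx
  | succ t ht _ => exact hg.succ t ht ω ▸ min_le_right _ _

lemma exists_rule (hg : AdmissibleOnlinePolicy B x E g b) :
    ∃ r, IsOnlineRule r ∧ ∀ t, 1 ≤ t → ∀ ω, g t ω = r t fun n ↦ E n ω := by
  choose h hmeas hspec using hg.online
  refine ⟨fun t e ↦ if ht : 1 ≤ t then h t ht fun i ↦ e (i.1 + 1) else 0,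
    fun t ↦ ⟨?_, fun e e' hee' ↦ ?_⟩, fun t ht ω ↦ by simp only [dif_pos ht, hspec t ht ω]⟩
  · by_cases ht : 1 ≤ t
    · simp only [dif_pos ht]
      exact (hmeas t ht).comp (by fun_prop)
    · simpa only [dif_neg ht] using measurable_const
  · by_cases ht : 1 ≤ t
    · simp only [dif_pos ht]
      congr 1
      funext i
      exact hee' _ ⟨by omega, by omega⟩
    · simp only [dif_neg ht]

lemma clipPolicy_eq {x' : ℝ} (hg : AdmissibleOnlinePolicy B x' E g b) (hx' : x' ≤ x)
    (hgr : ∀ t, 1 ≤ t → ∀ ω, g t ω = r t fun n ↦ E n ω) {t : ℕ} (ht : 1 ≤ t) (ω : Ω) :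
    clipPolicy B x r E t ω = g t ω :=
  (clipAlloc_eq_of_admissible hx' (hg.init ω)
    (fun t ht ↦ by rw [hg.succ t ht ω, hgr t ht ω])
    (fun t ht ↦ hgr t ht ω ▸ hg.admissible t ht ω) ht).trans (hgr t ht ω).symm

lemma of_le {y : ℝ} (hg : AdmissibleOnlinePolicy B x E g b) (hEnn : ∀ n ω, 0 ≤ E n ω)
    (hxy : x ≤ y) (hy : y ∈ Set.Icc 0 B) : ∃ b', AdmissibleOnlinePolicy B y E g b' := by
  obtain ⟨r, hr, hgr⟩ := hg.exists_rule
  have heq {t} (ht : 1 ≤ t) ω := hg.clipPolicy_eq hxy hgr ht ω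
  have hc := admissibleOnlinePolicy_clipPolicy hy hEnn hr
  exact ⟨_, hc.init, fun t ht ω ↦ heq ht ω ▸ hc.succ t ht ω,
    fun t ht ω ↦ heq ht ω ▸ hc.admissible t ht ω, hg.online⟩

end AdmissibleOnlinePolicy

variable [MeasurableSpace Ω] {P : Measure Ω} {γ : ℝ}

noncomputable def longRunThroughput (P : Measure Ω) (γ : ℝ) (g : ℕ → Ω → ℝ) : ℝ :=
  liminf (cesaro fun t ↦ ∫ ω, rate γ (g t ω) ∂P) atTop

lemma integral_rate_restartRule (hE : ∀ n, Measurable (E n)) (hEnn : ∀ n ω, 0 ≤ E n ω)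
    (hind : iIndepFun E P) (hident : ∀ n, IdentDistrib (E n) (E 1) P P) (hr : IsOnlineRule r)
    (hx : x ∈ Set.Icc 0 B) (ℓ : ℕ) {s : ℕ} (hs : 1 ≤ s) :
    ∫ ω, rate γ (clipPolicy B x (restartRule B ℓ r) E (ℓ + 1 + s) ω) ∂P =
      P.real {ω | B ≤ ∑ i ∈ range ℓ, E (i + 2) ω} * ∫ ω, rate γ (clipPolicy B B r E s ω) ∂P := by
  set F : (ℕ → ℝ) → ℝ := fun e ↦ if B ≤ ∑ i ∈ range ℓ, e (i + 2) then 1 else 0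
  set G : (ℕ → ℝ) → ℝ := fun e ↦ rate γ (clipAlloc B B (r · e) e s)
  have hG : Measurable G := measurable_rate.comp (hr.clipAlloc s).1
  have hpoint ω : rate γ (clipPolicy B x (restartRule B ℓ r) E (ℓ + 1 + s) ω) =
      F (E · ω) * G fun n ↦ E (ℓ + 1 + n) ω := by
    rw [clipPolicy, clipAlloc_restartRule hx (hEnn · ω) hs]
    by_cases h : B ≤ ∑ i ∈ range ℓ, E (i + 2) ω <;> simp [F, G, h]
  have hFdep : DependsOn F (Icc 2 (ℓ + 1) : Finset ℕ) := fun e e' h ↦ by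
    have hsum : ∑ i ∈ range ℓ, e (i + 2) = ∑ i ∈ range ℓ, e' (i + 2) :=
      sum_congr rfl fun i hi ↦ h (i + 2) (by simp only [mem_range] at hi; simp; omega)
    simp only [F, hsum]
  have hGdep : DependsOn (fun e : ℕ → ℝ ↦ G fun n ↦ e (ℓ + 1 + n))
      (Icc (ℓ + 2) (ℓ + 1 + s) : Finset ℕ) :=
    fun e e' h ↦ congrArg (rate γ) ((hr.clipAlloc s).2 fun n hn ↦
      h (ℓ + 1 + n) (by simp at hn ⊢; omega))
  have hFA : ∫ ω, F (E · ω) ∂P = P.real {ω | B ≤ ∑ i ∈ range ℓ, E (i + 2) ω} := by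
    rw [← integral_indicator_one (measurableSet_le measurable_const (by fun_prop))]
    rfl
  calc _ = ∫ ω, F (E · ω) * G (fun n ↦ E (ℓ + 1 + n) ω) ∂P :=
        integral_congr_ae (.of_forall hpoint)
    _ = (∫ ω, F (E · ω) ∂P) * ∫ ω, G (fun n ↦ E (ℓ + 1 + n) ω) ∂P :=
        hind.integral_mul_of_dependsOn hE
          (disjoint_left.2 fun a ha hb ↦ by simp only [mem_Icc] at ha hb; omega)
          (Measurable.ite (measurableSet_le measurable_const (by fun_prop)) measurable_const
            measurable_const) (hG.comp (by fun_prop)) hFdep hGdep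
    _ = _ := by rw [hFA, hind.integral_comp_shift hE hident hG]; rfl

variable [IsProbabilityMeasure P]

namespace AdmissibleOnlinePolicy

lemma integral_rate_mem_Icc (hg : AdmissibleOnlinePolicy B x E g b) (hγ : 0 ≤ γ) (hxB : x ≤ B)
    {t : ℕ} (ht : 1 ≤ t) : ∫ ω, rate γ (g t ω) ∂P ∈ Set.Icc 0 (rate γ B) :=
  BatteryPolicy.integral_rate_mem_Icc hγ fun ω ↦
    ⟨(hg.admissible t ht ω).1, (hg.admissible t ht ω).2.trans (hg.battery_le hxB ht ω)⟩

lemma longRunThroughput_le (hg : AdmissibleOnlinePolicy B x E g b) (hγ : 0 ≤ γ) (hxB : x ≤ B) :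
    longRunThroughput P γ g ≤ rate γ B :=
  liminf_cesaro_le fun _ ht ↦ hg.integral_rate_mem_Icc hγ hxB ht

theorem exists_sub_le_longRunThroughput (hg : AdmissibleOnlinePolicy B B E g b)
    (hE : ∀ n, Measurable (E n)) (hEnn : ∀ n ω, 0 ≤ E n ω) (hind : iIndepFun E P)
    (hident : ∀ n, IdentDistrib (E n) (E 1) P P) (hEint : Integrable (E 1) P)
    (hEpos : 0 < ∫ ω, E 1 ω ∂P) (hγ : 0 ≤ γ) (hx : x ∈ Set.Icc 0 B) {ε : ℝ} (hε : 0 < ε) :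
    ∃ g' b', AdmissibleOnlinePolicy B x E g' b' ∧
      longRunThroughput P γ g - ε ≤ longRunThroughput P γ g' := by
  obtain ⟨r, hr, hgr⟩ := hg.exists_rule
  have hfill := tendsto_measureReal_le_sum (P := P) (X := fun i ↦ E (i + 2)) (fun i ↦ hE _)
    (fun i ↦ hEnn _) ((hident 2).integrable_iff.2 hEint)
    (fun i j hij ↦ hind.indepFun (by simpa using hij)) (fun i ↦ (hident _).trans (hident 2).symm)
    ((hident 2).integral_eq ▸ hEpos) B
  obtain ⟨ℓ, hℓ⟩ := ((((tendsto_const_nhds (x := (1 : ℝ))).sub hfill).mul_const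
    (rate γ B)).eventually (gt_mem_nhds (show (1 - 1) * rate γ B < ε by simpa using hε))).exists
  refine ⟨_, _, admissibleOnlinePolicy_clipPolicy hx hEnn (hr.restartRule B ℓ), ?_⟩
  have hdelay := sub_le_liminf_cesaro_delay (k := ℓ + 1)
    (u := fun t ↦ ∫ ω, rate γ (g t ω) ∂P) (p := P.real {ω | B ≤ ∑ i ∈ range ℓ, E (i + 2) ω})
    ⟨measureReal_nonneg, measureReal_le_one⟩ (fun _ ht ↦ hg.integral_rate_mem_Icc hγ le_rfl ht)
    (w := fun t ↦ ∫ ω, rate γ (clipPolicy B x (restartRule B ℓ r) E t ω) ∂P)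
    (fun t ht ↦ by
      have h0 ω : clipPolicy B x (restartRule B ℓ r) E t ω = 0 :=
        clipAlloc_restartRule_eq_zero hx (hEnn · ω) fun h ↦ by omega
      simp [h0])
    (fun s hs ↦ by
      simp only [integral_rate_restartRule hE hEnn hind hident hr hx ℓ hs,
        hg.clipPolicy_eq le_rfl hgr hs])
  unfold longRunThroughput
  linarith

end AdmissibleOnlinePolicy

def achievableRates (P : Measure Ω) (γ B : ℝ) (E : ℕ → Ω → ℝ) (x : ℝ) : Set ℝ :=
  {R | ∃ g b, AdmissibleOnlinePolicy B x E g b ∧ R = longRunThroughput P γ g}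

lemma sSup_achievableRates_eq (hE : ∀ n, Measurable (E n)) (hEnn : ∀ n ω, 0 ≤ E n ω)
    (hind : iIndepFun E P) (hident : ∀ n, IdentDistrib (E n) (E 1) P P)
    (hEint : Integrable (E 1) P) (hEpos : 0 < ∫ ω, E 1 ω ∂P) (hγ : 0 ≤ γ)
    (hx : x ∈ Set.Icc 0 B) :
    sSup (achievableRates P γ B E x) = sSup (achievableRates P γ B E B) := by
  have hBB : B ∈ Set.Icc 0 B := ⟨hx.1.trans hx.2, le_rfl⟩
  have hne {y} (hy : y ∈ Set.Icc 0 B) : (achievableRates P γ B E y).Nonempty :=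
    ⟨_, _, _, admissibleOnlinePolicy_clipPolicy (r := fun _ _ ↦ 0) hy hEnn
      fun _ ↦ ⟨measurable_const, fun _ _ _ ↦ rfl⟩, rfl⟩
  have hbdd {y} (hy : y ∈ Set.Icc 0 B) : BddAbove (achievableRates P γ B E y) := by
    refine ⟨rate γ B, ?_⟩
    rintro _ ⟨g, b, hg, rfl⟩
    exact hg.longRunThroughput_le hγ hy.2
  refine le_antisymm (csSup_le_csSup (hbdd hBB) (hne hx) ?_) (csSup_le (hne hBB) ?_)
  · rintro _ ⟨g, b, hg, rfl⟩
    obtain ⟨b', hb'⟩ := hg.of_le hEnn hx.2 hBB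
    exact ⟨g, b', hb', rfl⟩
  · rintro _ ⟨g, b, hg, rfl⟩
    refine le_of_forall_pos_le_add fun ε hε ↦ ?_
    obtain ⟨g', b', hg', hle⟩ :=
      hg.exists_sub_le_longRunThroughput hE hEnn hind hident hEint hEpos hγ hx hε
    linarith [le_csSup (hbdd hx) ⟨g', b', hg', rfl⟩]

end BatteryPolicy

open BatteryPolicy in
/-- **The throughput does not depend on the initial battery level.** Let `E` be i.i.d.
nonnegative arrivals with `𝔼[E 1] > 0`, `B > 0`, `γ > 0`. If `g` is an admissible online
policy for initial battery level `B` achieving long-term average throughput `R`, then for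
every `ε > 0` there is an admissible online policy for initial battery level `0` whose
long-term average throughput is at least `R - ε`. Consequently, the optimal long-term
average throughput `sSup (S x)` is the same for every initial battery level
`x ∈ [0, B]`. -/
theorem stmt_14 {Ω : Type*} [MeasurableSpace Ω] (P : Measure Ω) [IsProbabilityMeasure P]
    (B γ : ℝ) (hB : 0 < B) (hγ : 0 < γ)
    (E : ℕ → Ω → ℝ) (hEmeas : ∀ t, Measurable (E t))
    (hEnn : ∀ t ω, 0 ≤ E t ω)
    (hindep : iIndepFun E P)
    (hident : ∀ t, IdentDistrib (E t) (E 1) P P)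
    (hEpos : 0 < ∫ ω, E 1 ω ∂P) (hEint : Integrable (E 1) P)
    (g b : ℕ → Ω → ℝ)
    (hb1 : ∀ ω, b 1 ω = B)
    (hbrec : ∀ t, 1 ≤ t → ∀ ω, b (t + 1) ω = min (b t ω - g t ω + E (t + 1) ω) B)
    (hadm : ∀ t, 1 ≤ t → ∀ ω, 0 ≤ g t ω ∧ g t ω ≤ b t ω)
    (honline : ∀ t, 1 ≤ t → ∃ h : (Fin t → ℝ) → ℝ, Measurable h ∧
      ∀ ω, g t ω = h (fun i => E (i.1 + 1) ω))
    (R : ℝ)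
    (hR : R = liminf (fun n : ℕ => (1 / (n : ℝ)) * ∑ t ∈ Finset.Icc 1 n,
        ∫ ω, (1 / 2) * Real.logb 2 (1 + γ * g t ω) ∂P) atTop)
    (S : ℝ → Set ℝ)
    (hS : ∀ x : ℝ, S x = {r : ℝ | ∃ g' b' : ℕ → Ω → ℝ,
        (∀ ω, b' 1 ω = x) ∧
        (∀ t, 1 ≤ t → ∀ ω, b' (t + 1) ω = min (b' t ω - g' t ω + E (t + 1) ω) B) ∧
        (∀ t, 1 ≤ t → ∀ ω, 0 ≤ g' t ω ∧ g' t ω ≤ b' t ω) ∧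
        (∀ t, 1 ≤ t → ∃ h : (Fin t → ℝ) → ℝ, Measurable h ∧
          ∀ ω, g' t ω = h (fun i => E (i.1 + 1) ω)) ∧
        r = liminf (fun n : ℕ => (1 / (n : ℝ)) * ∑ t ∈ Finset.Icc 1 n,
              ∫ ω, (1 / 2) * Real.logb 2 (1 + γ * g' t ω) ∂P) atTop}) :
    (∀ ε > (0:ℝ), ∃ gt bt : ℕ → Ω → ℝ,
      (∀ ω, bt 1 ω = 0) ∧
      (∀ t, 1 ≤ t → ∀ ω, bt (t + 1) ω = min (bt t ω - gt t ω + E (t + 1) ω) B) ∧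
      (∀ t, 1 ≤ t → ∀ ω, 0 ≤ gt t ω ∧ gt t ω ≤ bt t ω) ∧
      (∀ t, 1 ≤ t → ∃ h : (Fin t → ℝ) → ℝ, Measurable h ∧
        ∀ ω, gt t ω = h (fun i => E (i.1 + 1) ω)) ∧
      R - ε ≤ liminf (fun n : ℕ => (1 / (n : ℝ)) * ∑ t ∈ Finset.Icc 1 n,
          ∫ ω, (1 / 2) * Real.logb 2 (1 + γ * gt t ω) ∂P) atTop) ∧
    (∀ x ∈ Set.Icc (0:ℝ) B, sSup (S x) = sSup (S B)) := by
  have hg : AdmissibleOnlinePolicy B B E g b := ⟨hb1, hbrec, hadm, honline⟩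
  refine ⟨fun ε hε ↦ ?_, fun x hx ↦ ?_⟩
  · obtain ⟨g', b', ⟨h1, h2, h3, h4⟩, hle⟩ := hg.exists_sub_le_longRunThroughput hEmeas hEnn
      hindep hident hEint hEpos hγ.le ⟨le_rfl, hB.le⟩ hε
    rw [hR]
    exact ⟨g', b', h1, h2, h3, h4, hle⟩
  · have hSA : S = achievableRates P γ B E := funext fun y ↦ (hS y).trans <| Set.ext fun _ ↦
      ⟨fun ⟨g, b, h1, h2, h3, h4, h5⟩ ↦ ⟨g, b, ⟨h1, h2, h3, h4⟩, h5⟩,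
        fun ⟨g, b, ⟨h1, h2, h3, h4⟩, h5⟩ ↦ ⟨g, b, h1, h2, h3, h4, h5⟩⟩
    rw [hSA]
    exact sSup_achievableRates_eq hEmeas hEnn hindep hident hEint hEpos hγ.le hx
end

section
/- Let 0 < p < 1, B̄ > 0, γ > 0, and let (E_t)_{t≥1} be i.i.d. with P(E_t = B̄) = p and P(E_t = 0) = 1−p. Under the fixed fraction policy g_t = B̄·p·(1−p)^{t−j_t}, where j_t = max{τ ≤ t : E_τ = B̄} (with the convention that t = 1 counts as an arrival), the empirical average rate converges almost surely: lim_{n→∞} (1/n)∑_{t=1}^n ½·log₂(1 + γ·g_t) = ∑_{i=1}^∞ p·(1−p)^{i−1}·½·log₂(1 + γ·B̄·p·(1−p)^{i−1}) almost surely. -/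
/-!
For `t ≥ i + 2` the age `t - j t` equals `i` exactly when there is an arrival at `t - i` and none
in `(t - i, t]`. Such a run has probability `p (1 - p) ^ i`, and runs starting at times that are
congruent mod `i + 1` read disjoint blocks of the i.i.d. sequence, so the strong law of large
numbers on each residue class shows that the empirical frequency of age `i` tends a.s. to
`p (1 - p) ^ i`. Since the rate `½ log₂ (1 + γ B p (1 - p) ^ i)` of age `i` is summable in `i`,
dominated convergence over the ages (Tannery's theorem) turns the convergence of every frequency
into the convergence of the empirical average rate.
-/

open MeasureTheory ProbabilityTheory Filter Finset Topology

theorem tendsto_natDiv_add_const_div_self {m : ℕ} (hm : 0 < m) (c : ℝ) :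
    Tendsto (fun n : ℕ => (((n / m : ℕ) : ℝ) + c) / n) atTop (𝓝 (1 / m)) := by
  have hm' : (0 : ℝ) < m := by exact_mod_cast hm
  have hlim : ∀ d : ℝ, Tendsto (fun n : ℕ => ((n : ℝ) / m + d) / n) atTop (𝓝 (1 / m)) := by
    intro d
    have := (tendsto_const_div_atTop_nhds_zero_nat d).const_add (1 / (m : ℝ))
    rw [add_zero] at this
    refine this.congr' ?_
    filter_upwards [eventually_gt_atTop 0] with n hn
    field_simp
  refine tendsto_of_tendsto_of_tendsto_of_le_of_le' (hlim (c - 1)) (hlim c) ?_ ?_ <;>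
    filter_upwards [eventually_gt_atTop 0] with n hn <;>
    gcongr ?_ / _
  · have : (n : ℝ) ≤ (n / m : ℕ) * m + m := by exact_mod_cast (Nat.lt_div_mul_add hm).le
    linarith [(div_le_iff₀ hm').2 (this.trans_eq (add_one_mul _ _).symm)]
  · have : ((n / m : ℕ) : ℝ) * m ≤ n := by exact_mod_cast Nat.div_mul_le_self n m
    linarith [(le_div_iff₀ hm').2 this]

theorem tendsto_div_of_monotone_of_tendsto_mul {S : ℕ → ℝ} (hS : Monotone S) {m : ℕ}
    (hm : 0 < m) {L : ℝ} (h : Tendsto (fun K : ℕ => S (K * m) / K) atTop (𝓝 L)) :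
    Tendsto (fun n : ℕ => S n / n) atTop (𝓝 (L / m)) := by
  have hK : Tendsto (· / m) atTop atTop := Nat.tendsto_div_const_atTop hm.ne'
  have hlow := (h.comp hK).mul (tendsto_natDiv_add_const_div_self hm 0)
  have hup := (h.comp ((tendsto_add_atTop_nat 1).comp hK)).mul
    (tendsto_natDiv_add_const_div_self hm 1)
  rw [← div_eq_mul_one_div] at hlow hup
  refine tendsto_of_tendsto_of_tendsto_of_le_of_le' hlow hup ?_ ?_ <;>
    filter_upwards [eventually_ge_atTop m] with n hn <;>
    have hK0 : 0 < n / m := Nat.div_pos hn hm <;>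
    simp only [Function.comp_apply, add_zero]
  · rw [div_mul_div_cancel₀ (by positivity)]
    gcongr
    exact hS (Nat.div_mul_le_self n m)
  · rw [← Nat.cast_add_one, div_mul_div_cancel₀ (by positivity)]
    gcongr
    exact hS (by rw [add_one_mul]; exact (Nat.lt_div_mul_add hm).le)

theorem sum_range_mul_eq_sum_residues {M : Type*} [AddCommMonoid M] (X : ℕ → M) (K m : ℕ) :
    ∑ s ∈ range (K * m), X s = ∑ r ∈ range m, ∑ k ∈ range K, X (k * m + r) := by
  induction K with
  | zero => simp
  | succ K ih =>
    simp only [add_one_mul, sum_range_add, ih, sum_range_succ, sum_add_distrib]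

theorem tendsto_div_of_tendsto_comp_add_div {f : ℕ → ℝ} {c : ℝ} (k : ℕ)
    (h : Tendsto (fun n : ℕ => f (n + k) / n) atTop (𝓝 c)) :
    Tendsto (fun n : ℕ => f n / n) atTop (𝓝 c) := by
  rw [← tendsto_add_atTop_iff_nat k]
  have := h.mul (tendsto_natCast_div_add_atTop (k : ℝ))
  rw [mul_one] at this
  refine this.congr' ?_
  filter_upwards [eventually_gt_atTop 0] with n hn
  push_cast
  field_simp

theorem card_filter_Icc_div_le_one (n : ℕ) (P : ℕ → Prop) [DecidablePred P] :
    (#{t ∈ Icc 1 n | P t} : ℝ) / n ≤ 1 :=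
  div_le_one_of_le₀ (by simpa using card_filter_le (Icc 1 n) P) n.cast_nonneg

theorem sum_comp_eq_tsum_card_mul {ι : Type*} (s : Finset ι) (h : ℕ → ℝ) (A : ι → ℕ) :
    ∑ t ∈ s, h (A t) = ∑' i, (#{t ∈ s | A t = i} : ℝ) * h i := by
  rw [sum_comp, tsum_eq_sum (s := s.image A)]
  · simp only [nsmul_eq_mul]
  · intro i hi
    rw [filter_false_of_mem fun t ht (hAt : A t = i) => hi (hAt ▸ mem_image_of_mem A ht),
      card_empty, Nat.cast_zero, zero_mul]

theorem tendsto_avg_comp_of_tendsto_freq {h : ℕ → ℝ} (hh : Summable h) (A : ℕ → ℕ) {q : ℕ → ℝ}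
    (hq : ∀ i, Tendsto (fun n : ℕ => (#{t ∈ Icc 1 n | A t = i} : ℝ) / n) atTop (𝓝 (q i))) :
    Tendsto (fun n : ℕ => (1 / (n : ℝ)) * ∑ t ∈ Icc 1 n, h (A t)) atTop
      (𝓝 (∑' i, q i * h i)) := by
  have hbound : ∀ n i, ‖(#{t ∈ Icc 1 n | A t = i} : ℝ) / n * h i‖ ≤ |h i| := fun n i => by
    rw [norm_mul, Real.norm_of_nonneg (by positivity)]
    exact mul_le_of_le_one_left (abs_nonneg _) (card_filter_Icc_div_le_one n _)
  refine (tendsto_tsum_of_dominated_convergence hh.abs (fun i => (hq i).mul_const (h i))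
    (Eventually.of_forall hbound)).congr fun n => ?_
  simp only [sum_comp_eq_tsum_card_mul (Icc 1 n) h A, ← tsum_mul_left]
  exact tsum_congr fun i => by ring

theorem ProbabilityTheory.iIndepFun.indepFun_of_measurable_biSup {Ω ι β γ δ : Type*}
    {mΩ : MeasurableSpace Ω} {μ : Measure Ω} [mβ : MeasurableSpace β] [MeasurableSpace γ] [MeasurableSpace δ]
    {f : ι → Ω → β} (hf_indep : iIndepFun f μ) (hf : ∀ i, Measurable (f i)) {S T : Set ι}
    (hST : Disjoint S T) {X : Ω → γ} {Y : Ω → δ}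
    (hX : Measurable[⨆ i ∈ S, mβ.comap (f i)] X) (hY : Measurable[⨆ i ∈ T, mβ.comap (f i)] Y) :
    IndepFun X Y μ := by
  rw [IndepFun_iff_Indep]
  have := indep_iSup_of_disjoint (fun i => (hf i).comap_le)
    ((iIndepFun_iff_iIndep _ _ _).1 hf_indep) hST
  exact indep_of_indep_of_le_right (indep_of_indep_of_le_left this hX.comap_le) hY.comap_le

theorem identDistrib_indicator_const {Ω β : Type*} {mΩ : MeasurableSpace Ω} {μ : Measure Ω}
    [IsFiniteMeasure μ] [Zero β] [MeasurableSpace β] {s t : Set Ω} (hs : MeasurableSet s)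
    (ht : MeasurableSet t) (hst : μ s = μ t) (c : β) :
    IdentDistrib (s.indicator fun _ => c) (t.indicator fun _ => c) μ μ := by
  classical
  have hst' : μ sᶜ = μ tᶜ := by rw [measure_compl hs (measure_ne_top μ s),
    measure_compl ht (measure_ne_top μ t), hst]
  refine ⟨(measurable_const.indicator hs).aemeasurable,
    (measurable_const.indicator ht).aemeasurable, Measure.ext fun u hu => ?_⟩
  rw [Measure.map_apply (measurable_const.indicator hs) hu,
    Measure.map_apply (measurable_const.indicator ht) hu,
    Set.indicator_const_preimage_eq_union, Set.indicator_const_preimage_eq_union]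
  split_ifs <;> simp [hst, hst']

def runEvent {Ω : Type*} (E : ℕ → Ω → ℝ) (B : ℝ) (i a : ℕ) : Set Ω :=
  {ω | E a ω = B ∧ ∀ v ∈ Ioc a (a + i), E v ω = 0}

theorem measurableSet_runEvent {Ω : Type*} (E : ℕ → Ω → ℝ) (B : ℝ) (i a : ℕ) :
    MeasurableSet[⨆ v ∈ Set.Icc a (a + i), MeasurableSpace.comap (E v) inferInstance]
      (runEvent E B i a) := by
  have hpre : ∀ v ∈ Set.Icc a (a + i), ∀ c : ℝ,
      MeasurableSet[⨆ v ∈ Set.Icc a (a + i), MeasurableSpace.comap (E v) inferInstance]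
        (E v ⁻¹' {c}) := fun v hv c =>
    le_iSup₂ (f := fun v (_ : v ∈ Set.Icc a (a + i)) => MeasurableSpace.comap (E v) inferInstance)
      v hv _ ⟨{c}, measurableSet_singleton c, rfl⟩
  have hEq : runEvent E B i a = E a ⁻¹' {B} ∩ ⋂ v ∈ Ioc a (a + i), E v ⁻¹' {0} := by
    ext ω
    simp [runEvent]
  rw [hEq]
  refine (hpre a ⟨le_rfl, by omega⟩ B).inter (Finset.measurableSet_biInter _ fun v hv => ?_)
  rw [mem_Ioc] at hv
  exact hpre v ⟨hv.1.le, hv.2⟩ 0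

theorem measure_runEvent {Ω : Type*} [MeasurableSpace Ω] (P : Measure Ω) (p B : ℝ)
    (E : ℕ → Ω → ℝ) (hindep : iIndepFun E P)
    (hbern : ∀ t, 1 ≤ t → P {ω | E t ω = B} = ENNReal.ofReal p ∧
      P {ω | E t ω = 0} = ENNReal.ofReal (1 - p))
    (i : ℕ) {a : ℕ} (ha : 1 ≤ a) :
    P (runEvent E B i a) = ENNReal.ofReal p * ENNReal.ofReal (1 - p) ^ i := by
  have ha' : a ∉ Ioc a (a + i) := by simp
  have hEq : runEvent E B i a =
      ⋂ v ∈ insert a (Ioc a (a + i)), E v ⁻¹' (if v = a then {B} else {0}) := by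
    rw [Finset.set_biInter_insert, if_pos rfl]
    ext ω
    simp +contextual [runEvent, Nat.ne_of_gt]
  rw [hEq, hindep.measure_inter_preimage_eq_mul _ (fun _ _ => by split_ifs <;> simp),
    prod_insert ha', if_pos rfl,
    prod_congr rfl fun v hv => by rw [if_neg (ne_of_mem_of_not_mem hv ha')]]
  have hv : ∀ v ∈ Ioc a (a + i), P (E v ⁻¹' {0}) = ENNReal.ofReal (1 - p) := fun v hv =>
    (hbern v (ha.trans (mem_Ioc.1 hv).1.le)).2
  rw [prod_congr rfl hv, prod_const, Nat.card_Ioc, add_tsub_cancel_left]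
  exact congrArg (· * _) (hbern a ha).1

theorem ae_tendsto_avg_runEvent_residue {Ω : Type*} [MeasurableSpace Ω] (P : Measure Ω)
    [IsProbabilityMeasure P] (p B : ℝ) (hp0 : 0 ≤ p) (hp1 : p ≤ 1) (E : ℕ → Ω → ℝ)
    (hEmeas : ∀ t, Measurable (E t)) (hindep : iIndepFun E P)
    (hbern : ∀ t, 1 ≤ t → P {ω | E t ω = B} = ENNReal.ofReal p ∧
      P {ω | E t ω = 0} = ENNReal.ofReal (1 - p))
    (i : ℕ) {a : ℕ} (ha : 1 ≤ a) (r : ℕ) :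
    ∀ᵐ ω ∂P, Tendsto (fun K : ℕ => (∑ k ∈ range K,
        (runEvent E B i (k * (i + 1) + r + a)).indicator (fun _ => (1 : ℝ)) ω) / K) atTop
      (𝓝 (p * (1 - p) ^ i)) := by
  set X : ℕ → Ω → ℝ := fun k => (runEvent E B i (k * (i + 1) + r + a)).indicator fun _ => 1
  have hmeas : ∀ k, MeasurableSet (runEvent E B i (k * (i + 1) + r + a)) := fun k =>
    iSup₂_le (fun v _ => (hEmeas v).comap_le) _ (measurableSet_runEvent E B i _)
  have hprob : ∀ k, P (runEvent E B i (k * (i + 1) + r + a)) =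
      ENNReal.ofReal p * ENNReal.ofReal (1 - p) ^ i := fun k =>
    measure_runEvent P p B E hindep hbern i (by omega)
  have hdisj : ∀ k l, k ≠ l → Disjoint (Set.Icc (k * (i + 1) + r + a) (k * (i + 1) + r + a + i))
      (Set.Icc (l * (i + 1) + r + a) (l * (i + 1) + r + a + i)) := by
    intro k l hkl
    refine Set.disjoint_left.2 fun v hk hl => hkl ?_
    simp only [Set.mem_Icc] at hk hl
    have hk' : (v - (r + a)) / (i + 1) = k :=
      Nat.div_eq_of_lt_le (by omega) (by rw [add_one_mul]; omega)
    have hl' : (v - (r + a)) / (i + 1) = l :=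
      Nat.div_eq_of_lt_le (by omega) (by rw [add_one_mul]; omega)
    rw [← hk', hl']
  have hindepX : Pairwise fun k l => IndepFun (X k) (X l) P := fun k l hkl =>
    hindep.indepFun_of_measurable_biSup hEmeas (hdisj k l hkl)
      (measurable_const.indicator (measurableSet_runEvent E B i _))
      (measurable_const.indicator (measurableSet_runEvent E B i _))
  have hident : ∀ k, IdentDistrib (X k) (X 0) P P := fun k =>
    identDistrib_indicator_const (hmeas k) (hmeas 0) (by rw [hprob, hprob]) 1
  have hmean : P[X 0] = p * (1 - p) ^ i := by
    rw [integral_indicator_const _ (hmeas 0), measureReal_def, hprob, smul_eq_mul, mul_one,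
      ENNReal.toReal_mul, ENNReal.toReal_pow, ENNReal.toReal_ofReal hp0,
      ENNReal.toReal_ofReal (by linarith)]
  have := strong_law_ae_real X ((integrable_const 1).indicator (hmeas 0)) hindepX hident
  rwa [hmean] at this

theorem ae_tendsto_avg_runEvent {Ω : Type*} [MeasurableSpace Ω] (P : Measure Ω)
    [IsProbabilityMeasure P] (p B : ℝ) (hp0 : 0 ≤ p) (hp1 : p ≤ 1) (E : ℕ → Ω → ℝ)
    (hEmeas : ∀ t, Measurable (E t)) (hindep : iIndepFun E P)
    (hbern : ∀ t, 1 ≤ t → P {ω | E t ω = B} = ENNReal.ofReal p ∧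
      P {ω | E t ω = 0} = ENNReal.ofReal (1 - p))
    (i : ℕ) {a : ℕ} (ha : 1 ≤ a) :
    ∀ᵐ ω ∂P, Tendsto (fun n : ℕ =>
        (∑ s ∈ range n, (runEvent E B i (s + a)).indicator (fun _ => (1 : ℝ)) ω) / n)
      atTop (𝓝 (p * (1 - p) ^ i)) := by
  filter_upwards [ae_all_iff.2
    (ae_tendsto_avg_runEvent_residue P p B hp0 hp1 E hEmeas hindep hbern i ha)] with ω hω
  have hmono : Monotone fun n =>
      ∑ s ∈ range n, (runEvent E B i (s + a)).indicator (fun _ => (1 : ℝ)) ω := fun n n' hn =>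
    sum_le_sum_of_subset_of_nonneg (range_mono hn) fun _ _ _ =>
      Set.indicator_nonneg (fun _ _ => zero_le_one) _
  have hblocks := tendsto_finsetSum (range (i + 1)) fun r _ => hω r
  rw [sum_const, card_range, nsmul_eq_mul] at hblocks
  have := tendsto_div_of_monotone_of_tendsto_mul hmono (Nat.succ_pos i)
    (hblocks.congr fun K => by rw [sum_range_mul_eq_sum_residues, sum_div])
  rwa [mul_div_cancel_left₀ _ (by positivity)] at this

theorem add_sub_lastArrival_eq_iff {Ω : Type*} {E : ℕ → Ω → ℝ} {B : ℝ} (hB : B ≠ 0)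
    (hrange : ∀ t ω, E t ω = B ∨ E t ω = 0) (j : ℕ → Ω → ℕ)
    (hjle : ∀ t, 1 ≤ t → ∀ ω, 1 ≤ j t ω ∧ j t ω ≤ t)
    (hjarr : ∀ t, 1 ≤ t → ∀ ω, j t ω = 1 ∨ E (j t ω) ω = B)
    (hjmax : ∀ t, 1 ≤ t → ∀ ω, ∀ τ, j t ω < τ → τ ≤ t → E τ ω ≠ B)
    {i a : ℕ} (ha : 2 ≤ a) (ω : Ω) :
    a + i - j (a + i) ω = i ↔ ω ∈ runEvent E B i a := by
  have ht : 1 ≤ a + i := by omega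
  obtain ⟨hj1, hjt⟩ := hjle _ ht ω
  constructor
  · intro h
    have hja : j (a + i) ω = a := by omega
    refine ⟨?_, fun v hv => ?_⟩
    · rcases hjarr _ ht ω with h1 | hE
      · omega
      · rwa [hja] at hE
    · rw [mem_Ioc] at hv
      exact (hrange v ω).resolve_left (hjmax _ ht ω v (by omega) hv.2)
  · rintro ⟨hEa, hzero⟩
    suffices j (a + i) ω = a by omega
    by_contra hne
    rcases lt_or_gt_of_ne hne with hlt | hgt
    · exact hjmax _ ht ω a hlt (by omega) hEa
    · rcases hjarr _ ht ω with h1 | hE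
      · omega
      · exact hB (hE.symm.trans (hzero _ (mem_Ioc.2 ⟨hgt, hjt⟩)))

theorem ae_tendsto_card_sub_lastArrival_div {Ω : Type*} [MeasurableSpace Ω] (P : Measure Ω)
    [IsProbabilityMeasure P] (p B : ℝ) (hp0 : 0 ≤ p) (hp1 : p ≤ 1) (hB : B ≠ 0)
    (E : ℕ → Ω → ℝ) (hEmeas : ∀ t, Measurable (E t)) (hindep : iIndepFun E P)
    (hbern : ∀ t, 1 ≤ t → P {ω | E t ω = B} = ENNReal.ofReal p ∧
      P {ω | E t ω = 0} = ENNReal.ofReal (1 - p))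
    (hrange : ∀ t ω, E t ω = B ∨ E t ω = 0) (j : ℕ → Ω → ℕ)
    (hjle : ∀ t, 1 ≤ t → ∀ ω, 1 ≤ j t ω ∧ j t ω ≤ t)
    (hjarr : ∀ t, 1 ≤ t → ∀ ω, j t ω = 1 ∨ E (j t ω) ω = B)
    (hjmax : ∀ t, 1 ≤ t → ∀ ω, ∀ τ, j t ω < τ → τ ≤ t → E τ ω ≠ B) (i : ℕ) :
    ∀ᵐ ω ∂P, Tendsto (fun n : ℕ => (#{t ∈ Icc 1 n | t - j t ω = i} : ℝ) / n) atTop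
      (𝓝 (p * (1 - p) ^ i)) := by
  classical
  filter_upwards [ae_tendsto_avg_runEvent P p B hp0 hp1 E hEmeas hindep hbern i
    one_le_two] with ω hω
  have hcount : ∀ n, (#{t ∈ Icc 1 (n + (i + 1)) | t - j t ω = i} : ℝ) =
      #{t ∈ Icc 1 (i + 1) | t - j t ω = i} +
        ∑ s ∈ range n, (runEvent E B i (s + 2)).indicator (fun _ => (1 : ℝ)) ω := by
    intro n
    induction n with
    | zero => simp
    | succ n ih =>
      rw [natCast_card_filter] at ih ⊢
      rw [show n + 1 + (i + 1) = n + (i + 1) + 1 by ring, sum_Icc_succ_top (by omega), ih,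
        sum_range_succ, add_assoc, Set.indicator_apply]
      congr 2
      refine if_congr ?_ rfl rfl
      rw [← add_sub_lastArrival_eq_iff hB hrange j hjle hjarr hjmax (by omega : 2 ≤ n + 2) ω,
        show n + 2 + i = n + (i + 1) + 1 by ring]
  refine tendsto_div_of_tendsto_comp_add_div (i + 1) ?_
  simp_rw [hcount, add_div]
  simpa using (tendsto_const_div_atTop_nhds_zero_nat _).add hω

theorem summable_logb_one_add_geometric (b c : ℝ) {r : ℝ} (hr : |r| < 1) :
    Summable fun i : ℕ => Real.logb b (1 + c * r ^ i) :=
  (Real.summable_log_one_add_of_summable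
    ((summable_geometric_of_abs_lt_one hr).mul_left c)).div_const (Real.log b)

theorem stmt_18_general {Ω : Type*} [MeasurableSpace Ω] (P : Measure Ω) [IsProbabilityMeasure P]
    (p B γ : ℝ) (hp0 : 0 < p) (hp1 : p < 1) (hB : 0 < B)
    (E : ℕ → Ω → ℝ) (hEmeas : ∀ t, Measurable (E t))
    (hindep : iIndepFun E P)
    (hbern : ∀ t, 1 ≤ t → P {ω | E t ω = B} = ENNReal.ofReal p ∧
      P {ω | E t ω = 0} = ENNReal.ofReal (1 - p))
    (hrange : ∀ t ω, E t ω = B ∨ E t ω = 0)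
    (j : ℕ → Ω → ℕ)
    (hjle : ∀ t, 1 ≤ t → ∀ ω, 1 ≤ j t ω ∧ j t ω ≤ t)
    (hjarr : ∀ t, 1 ≤ t → ∀ ω, j t ω = 1 ∨ E (j t ω) ω = B)
    (hjmax : ∀ t, 1 ≤ t → ∀ ω, ∀ τ, j t ω < τ → τ ≤ t → E τ ω ≠ B)
    (g : ℕ → Ω → ℝ)
    (hg : ∀ t, 1 ≤ t → ∀ ω, g t ω = B * p * (1 - p) ^ (t - j t ω)) :
    ∀ᵐ ω ∂P, Tendsto (fun n : ℕ => (1 / (n : ℝ)) * ∑ t ∈ Finset.Icc 1 n,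
        (1 / 2) * Real.logb 2 (1 + γ * g t ω)) atTop
      (nhds (∑' i : ℕ, p * (1 - p) ^ i *
        ((1 / 2) * Real.logb 2 (1 + γ * B * p * (1 - p) ^ i)))) := by
  have hrate : Summable fun i : ℕ => (1 / 2) * Real.logb 2 (1 + γ * B * p * (1 - p) ^ i) :=
    (summable_logb_one_add_geometric 2 _ (abs_lt.2 ⟨by linarith, by linarith⟩)).mul_left _
  filter_upwards [ae_all_iff.2 (ae_tendsto_card_sub_lastArrival_div P p B hp0.le hp1.le hB.ne'
    E hEmeas hindep hbern hrange j hjle hjarr hjmax)] with ω hfreq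
  refine (tendsto_avg_comp_of_tendsto_freq hrate (fun t => t - j t ω) hfreq).congr fun n => ?_
  refine congrArg _ (sum_congr rfl fun t ht => ?_)
  rw [hg t (mem_Icc.1 ht).1 ω, ← mul_assoc, ← mul_assoc]

/-- **Almost-sure convergence of the empirical rate of the fixed fraction policy.** Let
`E` be i.i.d. with `P(E t = B) = p`, `P(E t = 0) = 1 - p`, `0 < p < 1`, `B > 0`,
`γ > 0`, and let `j t` be the time of the last energy arrival up to time `t` (time `1`
counting as an arrival). Under the policy `g t = B p (1-p)^{t - j t}`, almost surely
`(1/n) ∑_{t=1}^n ½ log₂(1 + γ g t) → ∑_{i=1}^∞ p (1-p)^{i-1} ½ log₂(1 + γ B p (1-p)^{i-1})`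
(the series below being indexed by `i : ℕ` starting at `0`). -/
theorem stmt_18 {Ω : Type*} [MeasurableSpace Ω] (P : Measure Ω) [IsProbabilityMeasure P]
    (p B γ : ℝ) (hp0 : 0 < p) (hp1 : p < 1) (hB : 0 < B) (hγ : 0 < γ)
    (E : ℕ → Ω → ℝ) (hEmeas : ∀ t, Measurable (E t))
    (hindep : iIndepFun E P)
    (hbern : ∀ t, 1 ≤ t → P {ω | E t ω = B} = ENNReal.ofReal p ∧
      P {ω | E t ω = 0} = ENNReal.ofReal (1 - p))
    (hrange : ∀ t ω, E t ω = B ∨ E t ω = 0)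
    (j : ℕ → Ω → ℕ)
    (hjle : ∀ t, 1 ≤ t → ∀ ω, 1 ≤ j t ω ∧ j t ω ≤ t)
    (hjarr : ∀ t, 1 ≤ t → ∀ ω, j t ω = 1 ∨ E (j t ω) ω = B)
    (hjmax : ∀ t, 1 ≤ t → ∀ ω, ∀ τ, j t ω < τ → τ ≤ t → E τ ω ≠ B)
    (g : ℕ → Ω → ℝ)
    (hg : ∀ t, 1 ≤ t → ∀ ω, g t ω = B * p * (1 - p) ^ (t - j t ω)) :
    ∀ᵐ ω ∂P, Tendsto (fun n : ℕ => (1 / (n : ℝ)) * ∑ t ∈ Finset.Icc 1 n,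
        (1 / 2) * Real.logb 2 (1 + γ * g t ω)) atTop
      (nhds (∑' i : ℕ, p * (1 - p) ^ i *
        ((1 / 2) * Real.logb 2 (1 + γ * B * p * (1 - p) ^ i)))) :=
  stmt_18_general P p B γ hp0 hp1 hB E hEmeas hindep hbern hrange j hjle hjarr hjmax g hg
end
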